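/- Every quasi-measure μ on the real line ℝ is the restriction (to the family of sets that are open or closed) of a unique Borel probability measure on ℝ. -/

import Mathlib

/-!
The distribution function `F t = μ (Iic t)` is monotone, and compact regularity of `μ` makes it
right continuous with limits `0` at `-∞` and `1` at `+∞`, so it is the distribution function of a
Borel probability measure `ν`. Through `F`, `ν` agrees with `μ` on half-lines and open intervals,
i.e. on the open preconnected sets, and by finite additivity on finite disjoint unions of them. A
compact subset of an open set `U` lies in finitely many connected components of `U`, so inner
regularity of both `ν` and `μ` gives `ν U = μ U`; closed sets follow by complementation.
Uniqueness holds because a finite Borel measure on `ℝ` is determined by its values on the `Iic t`.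
-/

open Set MeasureTheory BoundedContinuousFunction Filter Topology

/-- An *image* is a set that is either open or closed. -/
def IsImage {X : Type*} [TopologicalSpace X] (A : Set X) : Prop := IsOpen A ∨ IsClosed A

/-- A (normalized, additive, compact-regular) quasi-measure on the images of `X`. -/
structure IsQuasiMeasure {X : Type*} [TopologicalSpace X] (μ : Set X → ℝ) : Prop where
  nonneg : ∀ A : Set X, IsImage A → 0 ≤ μ A
  normalized : μ Set.univ = 1
  additive : ∀ A B : Set X, IsImage A → IsImage B → IsImage (A ∪ B) → Disjoint A B →
    μ (A ∪ B) = μ A + μ B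
  regular : ∀ U : Set X, IsOpen U →
    IsLUB {r : ℝ | ∃ K : Set X, IsCompact K ∧ K ⊆ U ∧ μ K = r} (μ U)

/-- A quasi-measure is simple if it only takes the values 0 and 1. -/
def IsSimpleQM {X : Type*} [TopologicalSpace X] (μ : Set X → ℝ) : Prop :=
  ∀ A : Set X, IsImage A → μ A = 0 ∨ μ A = 1

/-- Membership in the singly generated algebra `A(c) = {φ ∘ c : φ ∈ C(ℝ,ℝ)}`. -/
def InAlg {X : Type*} [TopologicalSpace X] (c f : X →ᵇ ℝ) : Prop :=
  ∃ φ : C(ℝ, ℝ), ∀ x, f x = φ (c x)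

-- The quasi-integral of `a` with respect to `μ`: `∫ t dμ_a(t)` where `μ_a`
-- is the Borel probability measure extending `μ ∘ a⁻¹` (if it exists).
open Classical in
noncomputable def qint {X : Type*} [TopologicalSpace X] (μ : Set X → ℝ) (a : X →ᵇ ℝ) : ℝ :=
  if h : ∃ ν : MeasureTheory.Measure ℝ, MeasureTheory.IsProbabilityMeasure ν ∧
      ∀ A : Set ℝ, IsImage A → ν A = ENNReal.ofReal (μ (a ⁻¹' A))
  then ∫ t, t ∂ h.choose else 0

/-- An image-transformation from `X` to `Y`. -/
structure IsImageTransformation {X Y : Type*} [TopologicalSpace X] [TopologicalSpace Y]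
    (q : Set X → Set Y) : Prop where
  image : ∀ A : Set X, IsImage A → IsImage (q A)
  top : q Set.univ = Set.univ
  openMap : ∀ U : Set X, IsOpen U → IsOpen (q U)
  additive : ∀ A B : Set X, IsImage A → IsImage B → IsImage (A ∪ B) → Disjoint A B →
    q (A ∪ B) = q A ∪ q B ∧ Disjoint (q A) (q B)
  regular : ∀ U : Set X, IsOpen U → ∀ K : Set Y, IsCompact K → K ⊆ q U →
    ∃ L : Set X, IsCompact L ∧ L ⊆ U ∧ K ⊆ q L

namespace IsImage

variable {X : Type*} [TopologicalSpace X] {A : Set X}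

theorem compl (h : IsImage A) : IsImage Aᶜ :=
  h.symm.imp (·.isOpen_compl) (·.isClosed_compl)

theorem measurableSet [MeasurableSpace X] [OpensMeasurableSpace X] (h : IsImage A) :
    MeasurableSet A :=
  h.elim IsOpen.measurableSet IsClosed.measurableSet

end IsImage

theorem IsOpen.not_isLeast {α : Type*} [LinearOrder α] [TopologicalSpace α] [OrderTopology α]
    [NoMinOrder α] [DenselyOrdered α] {V : Set α} {a : α} (hV : IsOpen V) : ¬IsLeast V a := by
  intro ⟨ha, hlow⟩
  obtain ⟨y, hyV, hya⟩ := Filter.nonempty_of_mem <|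
    inter_mem (mem_nhdsWithin_of_mem_nhds (hV.mem_nhds ha)) (self_mem_nhdsWithin : Iio a ∈ 𝓝[<] a)
  exact (hlow hyV).not_gt hya

theorem IsOpen.not_isGreatest {α : Type*} [LinearOrder α] [TopologicalSpace α] [OrderTopology α]
    [NoMaxOrder α] [DenselyOrdered α] {V : Set α} {a : α} (hV : IsOpen V) :
    ¬IsGreatest V a :=
  IsOpen.not_isLeast (α := αᵒᵈ) hV

theorem IsCompact.exists_pairwiseDisjoint_isPreconnected_cover {X : Type*} [TopologicalSpace X]
    [LocallyConnectedSpace X] {K U : Set X} (hK : IsCompact K) (hU : IsOpen U) (hKU : K ⊆ U) :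
    ∃ s : Finset (Set X), (∀ V ∈ s, IsOpen V ∧ IsPreconnected V) ∧
      (s : Set (Set X)).PairwiseDisjoint id ∧ K ⊆ ⋃₀ s ∧ ⋃₀ (s : Set (Set X)) ⊆ U := by
  classical
  obtain ⟨t, -, ht, hcover⟩ := hK.elim_finite_subcover_image (b := K)
    (c := connectedComponentIn U) (fun x _ => hU.connectedComponentIn)
    (fun x hx => mem_biUnion hx (mem_connectedComponentIn (hKU hx)))
  refine ⟨ht.toFinset.image (connectedComponentIn U), ?_, ?_, ?_, ?_⟩
  · simp only [Finset.mem_image, forall_exists_index, and_imp, forall_apply_eq_imp_iff₂]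
    exact fun x _ => ⟨hU.connectedComponentIn, isPreconnected_connectedComponentIn⟩
  · rintro _ hV _ hW hVW
    simp only [Finset.coe_image, mem_image] at hV hW
    obtain ⟨x, -, rfl⟩ := hV
    obtain ⟨y, -, rfl⟩ := hW
    refine not_not.1 fun hxy => hVW ?_
    obtain ⟨z, hzx, hzy⟩ := not_disjoint_iff.1 hxy
    rw [connectedComponentIn_eq hzx, connectedComponentIn_eq hzy]
  · simpa [sUnion_image] using hcover
  · simpa [sUnion_image] using fun x _ => connectedComponentIn_subset U x

namespace IsQuasiMeasure

section

variable {X : Type*} [TopologicalSpace X] {μ : Set X → ℝ} {A B U : Set X}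

theorem empty (hμ : IsQuasiMeasure μ) : μ ∅ = 0 := by
  have h := hμ.additive ∅ ∅ (Or.inl isOpen_empty) (Or.inl isOpen_empty)
    (by rw [union_empty]; exact Or.inl isOpen_empty) disjoint_bot_left
  rw [union_empty] at h
  linarith

theorem add_compl (hμ : IsQuasiMeasure μ) (hA : IsImage A) : μ A + μ Aᶜ = 1 := by
  rw [← hμ.normalized, ← union_compl_self A]
  exact (hμ.additive A Aᶜ hA hA.compl (by rw [union_compl_self]; exact Or.inl isOpen_univ)
    disjoint_compl_right).symm

theorem le_of_subset_of_isImage_diff (hμ : IsQuasiMeasure μ) (hA : IsImage A)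
    (hBA : IsImage (B \ A)) (hB : IsImage B) (h : A ⊆ B) : μ A ≤ μ B := by
  have hadd := hμ.additive A (B \ A) hA hBA (by rwa [union_sdiff_cancel h]) disjoint_sdiff_right
  rw [union_sdiff_cancel h] at hadd
  linarith [hμ.nonneg _ hBA]

theorem mono [T2Space X] (hμ : IsQuasiMeasure μ) (hA : IsImage A) (hB : IsImage B)
    (h : A ⊆ B) : μ A ≤ μ B := by
  have closed_le_open {C V : Set X} (hC : IsClosed C) (hV : IsOpen V) (hCV : C ⊆ V) :
      μ C ≤ μ V :=
    hμ.le_of_subset_of_isImage_diff (Or.inr hC) (Or.inl (hV.sdiff hC)) (Or.inl hV) hCV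
  have open_le_open {V W : Set X} (hV : IsOpen V) (hW : IsOpen W) (hVW : V ⊆ W) :
      μ V ≤ μ W := by
    refine (hμ.regular V hV).2 ?_
    rintro _ ⟨K, hK, hKV, rfl⟩
    exact closed_le_open hK.isClosed hW (hKV.trans hVW)
  rcases hA with hA | hA <;> rcases hB with hB | hB
  · exact open_le_open hA hB h
  · exact hμ.le_of_subset_of_isImage_diff (Or.inl hA) (Or.inr (hB.sdiff hA)) (Or.inr hB) h
  · exact closed_le_open hA hB h
  · have := open_le_open hB.isOpen_compl hA.isOpen_compl (compl_subset_compl.2 h)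
    linarith [hμ.add_compl (Or.inr hA), hμ.add_compl (Or.inr hB)]

theorem isLUB_image_of_forall_isCompact [T2Space X] {ι : Type*} (hμ : IsQuasiMeasure μ)
    (hU : IsOpen U) (C : ι → Set X) {s : Set ι} (hs : s.Nonempty)
    (hC : ∀ i ∈ s, IsImage (C i) ∧ C i ⊆ U)
    (hcover : ∀ K, IsCompact K → K.Nonempty → K ⊆ U → ∃ i ∈ s, K ⊆ C i) :
    IsLUB ((fun i => μ (C i)) '' s) (μ U) := by
  refine ⟨?_, fun c hc => (hμ.regular U hU).2 ?_⟩
  · rintro _ ⟨i, hi, rfl⟩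
    exact hμ.mono (hC i hi).1 (Or.inl hU) (hC i hi).2
  · rintro _ ⟨K, hK, hKU, rfl⟩
    obtain rfl | hne := K.eq_empty_or_nonempty
    · obtain ⟨i, hi⟩ := hs
      rw [hμ.empty]
      exact (hμ.nonneg _ (hC i hi).1).trans (hc ⟨i, hi, rfl⟩)
    · obtain ⟨i, hi, hKi⟩ := hcover K hK hne hKU
      exact (hμ.mono (Or.inr hK.isClosed) (hC i hi).1 hKi).trans (hc ⟨i, hi, rfl⟩)

end

section

variable {X : Type*} [TopologicalSpace X] [MeasurableSpace X]
  {μ : Set X → ℝ} {ν : Measure X} {A U : Set X}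

theorem measure_compl_eq_ofReal [OpensMeasurableSpace X] [IsProbabilityMeasure ν]
    (hμ : IsQuasiMeasure μ) (hA : IsImage A) (h : ν A = ENNReal.ofReal (μ A)) :
    ν Aᶜ = ENNReal.ofReal (μ Aᶜ) := by
  rw [prob_compl_eq_one_sub hA.measurableSet, h, eq_sub_of_add_eq' (hμ.add_compl hA),
    ENNReal.ofReal_sub 1 (hμ.nonneg A hA), ENNReal.ofReal_one]

theorem measure_sUnion_eq_ofReal [OpensMeasurableSpace X] (hμ : IsQuasiMeasure μ)
    (s : Finset (Set X)) (hopen : ∀ V ∈ s, IsOpen V) (hdisj : (s : Set (Set X)).PairwiseDisjoint id)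
    (h : ∀ V ∈ s, ν V = ENNReal.ofReal (μ V)) :
    ν (⋃₀ s) = ENNReal.ofReal (μ (⋃₀ s)) := by
  classical
  induction s using Finset.induction_on with
  | empty => simp [hμ.empty]
  | insert V s hVs ih =>
    simp only [Finset.mem_insert, forall_eq_or_imp, Finset.coe_insert, sUnion_insert] at *
    rw [pairwiseDisjoint_insert_of_notMem (by exact_mod_cast hVs)] at hdisj
    have hsopen : IsOpen (⋃₀ (s : Set (Set X))) := isOpen_sUnion hopen.2
    have hdisjV : Disjoint V (⋃₀ (s : Set (Set X))) := disjoint_sUnion_right.2 hdisj.2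
    rw [measure_union hdisjV hsopen.measurableSet, hμ.additive V _ (Or.inl hopen.1)
      (Or.inl hsopen) (Or.inl (hopen.1.union hsopen)) hdisjV, ENNReal.ofReal_add
      (hμ.nonneg _ (Or.inl hopen.1)) (hμ.nonneg _ (Or.inl hsopen)), h.1, ih hopen.2 hdisj.1 h.2]

theorem measure_eq_ofReal_of_isOpen [T2Space X] [IsFiniteMeasure ν] [ν.Regular]
    (hμ : IsQuasiMeasure μ) (hU : IsOpen U)
    (happrox : ∀ K, IsCompact K → K ⊆ U →
      ∃ W, IsOpen W ∧ K ⊆ W ∧ W ⊆ U ∧ ν W = ENNReal.ofReal (μ W)) :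
    ν U = ENNReal.ofReal (μ U) := by
  refine le_antisymm (le_of_forall_lt fun r hr => ?_) ?_
  · obtain ⟨K, hKU, hK, hrK⟩ := hU.exists_lt_isCompact hr
    obtain ⟨W, hW, hKW, hWU, hνW⟩ := happrox K hK hKU
    calc r < ν K := hrK
      _ ≤ ν W := measure_mono hKW
      _ = ENNReal.ofReal (μ W) := hνW
      _ ≤ ENNReal.ofReal (μ U) :=
        ENNReal.ofReal_le_ofReal (hμ.mono (Or.inl hW) (Or.inl hU) hWU)
  · rw [← ENNReal.ofReal_toReal (measure_ne_top ν U)]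
    refine ENNReal.ofReal_le_ofReal ((hμ.regular U hU).2 ?_)
    rintro _ ⟨K, hK, hKU, rfl⟩
    obtain ⟨W, hW, hKW, hWU, hνW⟩ := happrox K hK hKU
    calc μ K ≤ μ W := hμ.mono (Or.inr hK.isClosed) (Or.inl hW) hKW
      _ = (ν W).toReal := by rw [hνW, ENNReal.toReal_ofReal (hμ.nonneg W (Or.inl hW))]
      _ ≤ (ν U).toReal := ENNReal.toReal_mono (measure_ne_top ν U) (measure_mono hWU)

end

section

variable {μ : Set ℝ → ℝ}

theorem Iic_eq_one_sub_Ioi (hμ : IsQuasiMeasure μ) (t : ℝ) : μ (Iic t) = 1 - μ (Ioi t) := by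
  rw [← compl_Iic, ← hμ.add_compl (Or.inr isClosed_Iic), add_sub_cancel_right]

theorem isLUB_Iic_of_lt (hμ : IsQuasiMeasure μ) (b : ℝ) :
    IsLUB ((fun s => μ (Iic s)) '' Iio b) (μ (Iio b)) := by
  refine hμ.isLUB_image_of_forall_isCompact isOpen_Iio Iic nonempty_Iio
    (fun s hs => ⟨Or.inr isClosed_Iic, Iic_subset_Iio.2 hs⟩) fun K hK hne hKb => ?_
  exact ⟨sSup K, hKb (hK.sSup_mem hne), fun k hk => le_csSup hK.bddAbove hk⟩

theorem isLUB_Ioi_of_gt (hμ : IsQuasiMeasure μ) (x : ℝ) :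
    IsLUB ((fun s => μ (Ioi s)) '' Ioi x) (μ (Ioi x)) := by
  refine hμ.isLUB_image_of_forall_isCompact isOpen_Ioi Ioi nonempty_Ioi
    (fun s hs => ⟨Or.inl isOpen_Ioi, Ioi_subset_Ioi (le_of_lt hs)⟩) fun K hK hne hKx => ?_
  obtain ⟨s, hxs, hsK⟩ := exists_between (mem_Ioi.1 (hKx (hK.sInf_mem hne)))
  exact ⟨s, hxs, fun k hk => hsK.trans_le (csInf_le hK.bddBelow hk)⟩

theorem isLUB_range_Iic (hμ : IsQuasiMeasure μ) : IsLUB (range fun t => μ (Iic t)) 1 := by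
  rw [← image_univ, ← hμ.normalized]
  refine hμ.isLUB_image_of_forall_isCompact isOpen_univ Iic univ_nonempty
    (fun _ _ => ⟨Or.inr isClosed_Iic, subset_univ _⟩) fun K hK _ _ => ?_
  exact ⟨sSup K, mem_univ _, fun k hk => le_csSup hK.bddAbove hk⟩

theorem isLUB_range_Ioi (hμ : IsQuasiMeasure μ) : IsLUB (range fun t => μ (Ioi t)) 1 := by
  rw [← image_univ, ← hμ.normalized]
  refine hμ.isLUB_image_of_forall_isCompact isOpen_univ Ioi univ_nonempty
    (fun _ _ => ⟨Or.inl isOpen_Ioi, subset_univ _⟩) fun K hK _ _ => ?_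
  exact ⟨sInf K - 1, mem_univ _, fun k hk => show sInf K - 1 < k by
    linarith [csInf_le hK.bddBelow hk]⟩

theorem monotone_Iic (hμ : IsQuasiMeasure μ) : Monotone fun t => μ (Iic t) :=
  fun _ _ h => hμ.mono (Or.inr isClosed_Iic) (Or.inr isClosed_Iic) (Iic_subset_Iic.2 h)

theorem antitone_Ioi (hμ : IsQuasiMeasure μ) : Antitone fun t => μ (Ioi t) :=
  fun _ _ h => hμ.mono (Or.inl isOpen_Ioi) (Or.inl isOpen_Ioi) (Ioi_subset_Ioi h)

/-- Right continuity of `t ↦ μ (Iic t)` is the regularity of `μ` on the half-lines `Ioi x`. -/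
noncomputable def cdf (hμ : IsQuasiMeasure μ) : StieltjesFunction ℝ where
  toFun t := μ (Iic t)
  mono' := hμ.monotone_Iic
  right_continuous' x := by
    rw [← continuousWithinAt_Ioi_iff_Ici, ContinuousWithinAt]
    have h := hμ.antitone_Ioi.tendsto_nhdsGT x
    rw [(hμ.isLUB_Ioi_of_gt x).csSup_eq (nonempty_Ioi.image _)] at h
    simpa only [hμ.Iic_eq_one_sub_Ioi] using h.const_sub 1

theorem cdf_apply (hμ : IsQuasiMeasure μ) (t : ℝ) : hμ.cdf t = μ (Iic t) := rfl

theorem tendsto_cdf_atBot (hμ : IsQuasiMeasure μ) : Tendsto hμ.cdf atBot (𝓝 0) := by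
  have h := (tendsto_atBot_isLUB hμ.antitone_Ioi hμ.isLUB_range_Ioi).const_sub 1
  rw [sub_self] at h
  exact h.congr fun t => (hμ.Iic_eq_one_sub_Ioi t).symm

theorem tendsto_cdf_atTop (hμ : IsQuasiMeasure μ) : Tendsto hμ.cdf atTop (𝓝 1) :=
  tendsto_atTop_isLUB hμ.monotone_Iic hμ.isLUB_range_Iic

theorem leftLim_cdf (hμ : IsQuasiMeasure μ) (b : ℝ) :
    Function.leftLim hμ.cdf b = μ (Iio b) := by
  rw [hμ.cdf.mono.leftLim_eq_sSup]
  exact (hμ.isLUB_Iic_of_lt b).csSup_eq (nonempty_Iio.image _)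

noncomputable def toMeasure (hμ : IsQuasiMeasure μ) : Measure ℝ := hμ.cdf.measure

instance isProbabilityMeasure_toMeasure (hμ : IsQuasiMeasure μ) :
    IsProbabilityMeasure hμ.toMeasure :=
  ⟨by simp [toMeasure, hμ.cdf.measure_univ hμ.tendsto_cdf_atBot hμ.tendsto_cdf_atTop]⟩

theorem toMeasure_Iic (hμ : IsQuasiMeasure μ) (x : ℝ) :
    hμ.toMeasure (Iic x) = ENNReal.ofReal (μ (Iic x)) := by
  rw [toMeasure, hμ.cdf.measure_Iic hμ.tendsto_cdf_atBot, sub_zero, cdf_apply]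

theorem toMeasure_Iio (hμ : IsQuasiMeasure μ) (x : ℝ) :
    hμ.toMeasure (Iio x) = ENNReal.ofReal (μ (Iio x)) := by
  rw [toMeasure, hμ.cdf.measure_Iio hμ.tendsto_cdf_atBot, sub_zero, leftLim_cdf]

theorem toMeasure_Ioi (hμ : IsQuasiMeasure μ) (x : ℝ) :
    hμ.toMeasure (Ioi x) = ENNReal.ofReal (μ (Ioi x)) := by
  simpa only [compl_Iic] using
    hμ.measure_compl_eq_ofReal (Or.inr isClosed_Iic) (hμ.toMeasure_Iic x)

theorem toMeasure_Ioo (hμ : IsQuasiMeasure μ) (a b : ℝ) :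
    hμ.toMeasure (Ioo a b) = ENNReal.ofReal (μ (Ioo a b)) := by
  obtain hba | hab := le_or_gt b a
  · rw [Ioo_eq_empty (not_lt.2 hba), measure_empty, hμ.empty, ENNReal.ofReal_zero]
  have hunion : Iic a ∪ Ioo a b = Iio b := Iic_union_Ioo_eq_Iio hab
  have hadd := hμ.additive (Iic a) (Ioo a b) (Or.inr isClosed_Iic) (Or.inl isOpen_Ioo)
    (by rw [hunion]; exact Or.inl isOpen_Iio) (Iic_disjoint_Ioi le_rfl |>.mono_right
      Ioo_subset_Ioi_self)
  rw [hunion] at hadd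
  rw [toMeasure, hμ.cdf.measure_Ioo, leftLim_cdf, cdf_apply, hadd, add_sub_cancel_left]

/-- Open preconnected subsets of `ℝ` are the open intervals, possibly unbounded. -/
theorem toMeasure_of_isPreconnected (hμ : IsQuasiMeasure μ) {V : Set ℝ} (hV : IsOpen V)
    (hc : IsPreconnected V) : hμ.toMeasure V = ENNReal.ofReal (μ V) := by
  obtain rfl | hne := V.eq_empty_or_nonempty
  · rw [measure_empty, hμ.empty, ENNReal.ofReal_zero]
  have hint := hc.mem_intervals
  generalize sInf V = a, sSup V = b at hint
  simp only [mem_insert_iff, mem_singleton_iff] at hint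
  rcases hint with rfl | rfl | rfl | rfl | rfl | rfl | rfl | rfl | rfl | rfl
  · exact (hV.not_isLeast (isLeast_Icc (nonempty_Icc.1 hne))).elim
  · exact (hV.not_isLeast (isLeast_Ico (nonempty_Ico.1 hne))).elim
  · exact (hV.not_isGreatest (isGreatest_Ioc (nonempty_Ioc.1 hne))).elim
  · exact hμ.toMeasure_Ioo a b
  · exact (hV.not_isLeast isLeast_Ici).elim
  · exact hμ.toMeasure_Ioi a
  · exact (hV.not_isGreatest isGreatest_Iic).elim
  · exact hμ.toMeasure_Iio b
  · rw [measure_univ, hμ.normalized, ENNReal.ofReal_one]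
  · rw [measure_empty, hμ.empty, ENNReal.ofReal_zero]

theorem toMeasure_of_isOpen (hμ : IsQuasiMeasure μ) {U : Set ℝ} (hU : IsOpen U) :
    hμ.toMeasure U = ENNReal.ofReal (μ U) := by
  refine hμ.measure_eq_ofReal_of_isOpen hU fun K hK hKU => ?_
  obtain ⟨s, hs, hdisj, hKs, hsU⟩ :=
    hK.exists_pairwiseDisjoint_isPreconnected_cover hU hKU
  exact ⟨⋃₀ s, isOpen_sUnion fun V hV => (hs V hV).1, hKs, hsU,
    hμ.measure_sUnion_eq_ofReal s (fun V hV => (hs V hV).1) hdisj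
      fun V hV => hμ.toMeasure_of_isPreconnected (hs V hV).1 (hs V hV).2⟩

theorem toMeasure_of_isImage (hμ : IsQuasiMeasure μ) {A : Set ℝ} (hA : IsImage A) :
    hμ.toMeasure A = ENNReal.ofReal (μ A) := by
  rcases hA with hA | hA
  · exact hμ.toMeasure_of_isOpen hA
  · simpa only [compl_compl] using hμ.measure_compl_eq_ofReal (Or.inl hA.isOpen_compl)
      (hμ.toMeasure_of_isOpen hA.isOpen_compl)

end

end IsQuasiMeasure

/-- every quasi-measure on ℝ is the restriction of a unique Borel
probability measure. -/
theorem quasiMeasure_real_extends_to_borel (μ : Set ℝ → ℝ) (hμ : IsQuasiMeasure μ) :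
    ∃! ν : MeasureTheory.Measure ℝ, MeasureTheory.IsProbabilityMeasure ν ∧
      ∀ A : Set ℝ, IsImage A → ν A = ENNReal.ofReal (μ A) := by
  refine ⟨hμ.toMeasure, ⟨inferInstance, fun A hA => hμ.toMeasure_of_isImage hA⟩, ?_⟩
  rintro ν ⟨hν, hνμ⟩
  refine Measure.ext_of_Iic ν hμ.toMeasure fun x => ?_
  rw [hνμ _ (Or.inr isClosed_Iic), hμ.toMeasure_Iic]
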